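/- Let (X,T) be a dynamical system on a compact metric space, and let (K(X), T_K) be the induced system on the hyperspace of non-empty closed subsets of X with the Hausdorff metric, where T_K(A) = T(A). Then (X,T) is weakly mixing if and only if (K(X), T_K) is topologically transitive. -/

import Mathlib

/-!
The Hausdorff metric on `NonemptyCompacts X` induces the Vietoris topology, so the argument is
purely topological.

Weak mixing yields, for finitely many pairs of nonempty open sets `(Uᵢ, Vᵢ)`, one time `n` with
`Tⁿ Uᵢ ∩ Vᵢ ≠ ∅` for every `i` (Furstenberg's intersection lemma). Applied to all pairs formed from
a basic Vietoris neighbourhood `⟨U₁, …, Uₖ⟩` of `A` and one `⟨V₁, …, Vₗ⟩` of `B`, picking one witness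
per pair gives a finite set in the first neighbourhood whose image under `Tⁿ` lies in the second.

Conversely, the transitivity of `T_K` from `{K ⊆ C}` to `{K ∩ B ≠ ∅, K ∩ D ≠ ∅}` provides a time `s`
with `T⁻ˢB ≠ ∅` and `C ∩ T⁻ˢD ≠ ∅`; transitivity from `{K ∩ A ≠ ∅, K ∩ T⁻ˢB ≠ ∅}` to
`{K ⊆ C ∩ T⁻ˢD}` then gives a time `n` moving `A` into `C` and, since `Tⁿ` and `Tˢ` commute,
`B` into `D`.
-/

open Set Function TopologicalSpace

section HittingTimes

variable {Y : Type*}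

def hittingTimes (f : Y → Y) (U V : Set Y) : Set ℕ :=
  {n | (f^[n] '' U ∩ V).Nonempty}

variable {f : Y → Y} {U U' V V' : Set Y} {n : ℕ}

theorem mem_hittingTimes : n ∈ hittingTimes f U V ↔ (U ∩ f^[n] ⁻¹' V).Nonempty :=
  image_inter_nonempty_iff

theorem hittingTimes_mono (hU : U ⊆ U') (hV : V ⊆ V') :
    hittingTimes f U V ⊆ hittingTimes f U' V' :=
  fun _ h => h.mono (inter_subset_inter (image_mono hU) hV)

theorem hittingTimes_preimage_iterate_subset (s : ℕ) :
    hittingTimes f (f^[s] ⁻¹' U) (f^[s] ⁻¹' V) ⊆ hittingTimes f U V := by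
  rintro m ⟨_, ⟨x, hxU, rfl⟩, hxV⟩
  refine ⟨f^[s] (f^[m] x), ⟨f^[s] x, hxU, ?_⟩, hxV⟩
  exact (Commute.iterate_iterate_self f m s).eq x

theorem hittingTimes_prodMap (A B C D : Set Y) :
    hittingTimes (Prod.map f f) (A ×ˢ B) (C ×ˢ D) = hittingTimes f A C ∩ hittingTimes f B D := by
  ext n
  simp only [mem_inter_iff, mem_hittingTimes, Prod.map_iterate, preimage_prod_map_prod,
    prod_inter_prod, prod_nonempty_iff]

end HittingTimes

theorem range_subset_sUnion_and_forall_inter_nonempty {Y ι : Type*} {u : Set (Set Y)}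
    {g : ι → u} (hg : Surjective g) {z : ι → Y} (hz : ∀ i, z i ∈ (g i : Set Y)) :
    range z ⊆ ⋃₀ u ∧ ∀ U ∈ u, (range z ∩ U).Nonempty := by
  refine ⟨?_, fun U hU => ?_⟩
  · rintro _ ⟨i, rfl⟩
    exact ⟨g i, (g i).2, hz i⟩
  · obtain ⟨i, hi⟩ := hg ⟨U, hU⟩
    exact ⟨z i, mem_range_self i, by simpa [hi] using hz i⟩

section Transitivity

variable {Y : Type*} [TopologicalSpace Y] {f : Y → Y}

def IsTopologicallyTransitive (f : Y → Y) : Prop :=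
  ∀ U V : Set Y, IsOpen U → IsOpen V → U.Nonempty → V.Nonempty → (hittingTimes f U V).Nonempty

theorem isTopologicallyTransitive_prodMap_iff :
    IsTopologicallyTransitive (Prod.map f f) ↔
      ∀ A B C D : Set Y, IsOpen A → IsOpen B → IsOpen C → IsOpen D →
        A.Nonempty → B.Nonempty → C.Nonempty → D.Nonempty →
          (hittingTimes f A C ∩ hittingTimes f B D).Nonempty := by
  refine ⟨fun h A B C D hA hB hC hD hAn hBn hCn hDn => ?_, fun h W W' hW hW' => ?_⟩
  · rw [← hittingTimes_prodMap]
    exact h _ _ (hA.prod hB) (hC.prod hD) (hAn.prod hBn) (hCn.prod hDn)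
  · rintro ⟨⟨a, b⟩, hab⟩ ⟨⟨c, d⟩, hcd⟩
    obtain ⟨A, B, hA, hB, ha, hb, hABW⟩ := isOpen_prod_iff.1 hW a b hab
    obtain ⟨C, D, hC, hD, hc, hd, hCDW'⟩ := isOpen_prod_iff.1 hW' c d hcd
    have hn := h A B C D hA hB hC hD ⟨a, ha⟩ ⟨b, hb⟩ ⟨c, hc⟩ ⟨d, hd⟩
    rw [← hittingTimes_prodMap] at hn
    exact hn.mono (hittingTimes_mono hABW hCDW')

theorem IsTopologicallyTransitive.of_prodMap (h : IsTopologicallyTransitive (Prod.map f f)) :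
    IsTopologicallyTransitive f := fun U V hU hV hUn hVn => by
  simpa only [inter_self] using
    isTopologicallyTransitive_prodMap_iff.1 h U U V V hU hU hV hV hUn hUn hVn hVn

theorem IsTopologicallyTransitive.exists_hittingTimes_subset_inter (hf : Continuous f)
    (h : IsTopologicallyTransitive (Prod.map f f)) {A B C D : Set Y}
    (hA : IsOpen A) (hB : IsOpen B) (hC : IsOpen C) (hD : IsOpen D)
    (hAn : A.Nonempty) (hBn : B.Nonempty) (hCn : C.Nonempty) (hDn : D.Nonempty) :
    ∃ U V : Set Y, IsOpen U ∧ IsOpen V ∧ U.Nonempty ∧ V.Nonempty ∧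
      hittingTimes f U V ⊆ hittingTimes f A B ∩ hittingTimes f C D := by
  obtain ⟨k, hkAC, hkBD⟩ :=
    isTopologicallyTransitive_prodMap_iff.1 h A B C D hA hB hC hD hAn hBn hCn hDn
  refine ⟨A ∩ f^[k] ⁻¹' C, B ∩ f^[k] ⁻¹' D, hA.inter (hC.preimage (hf.iterate k)),
    hB.inter (hD.preimage (hf.iterate k)), mem_hittingTimes.1 hkAC, mem_hittingTimes.1 hkBD,
    fun m hm => ⟨?_, ?_⟩⟩
  · exact hittingTimes_mono inter_subset_left inter_subset_left hm
  · exact hittingTimes_preimage_iterate_subset k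
      (hittingTimes_mono inter_subset_right inter_subset_right hm)

theorem IsTopologicallyTransitive.exists_forall_mem_hittingTimes {ι : Type*} [Finite ι]
    (hf : Continuous f) (h : IsTopologicallyTransitive (Prod.map f f)) {U V : ι → Set Y}
    (hU : ∀ i, IsOpen (U i)) (hV : ∀ i, IsOpen (V i))
    (hUn : ∀ i, (U i).Nonempty) (hVn : ∀ i, (V i).Nonempty) :
    ∃ n, ∀ i, n ∈ hittingTimes f (U i) (V i) := by
  rcases isEmpty_or_nonempty ι with hι | ⟨⟨i₀⟩⟩
  · exact ⟨0, isEmptyElim⟩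
  have key : ∀ s : Set ι, s.Finite → ∃ U' V' : Set Y, IsOpen U' ∧ IsOpen V' ∧ U'.Nonempty ∧
      V'.Nonempty ∧ hittingTimes f U' V' ⊆ ⋂ i ∈ s, hittingTimes f (U i) (V i) := by
    intro s hs
    induction s, hs using Set.Finite.induction_on with
    | empty => exact ⟨U i₀, V i₀, hU i₀, hV i₀, hUn i₀, hVn i₀, by simp⟩
    | @insert i s _ _ ih =>
      obtain ⟨U', V', hU', hV', hU'n, hV'n, hsub⟩ := ih
      obtain ⟨U'', V'', hU'', hV'', hU''n, hV''n, hsub'⟩ :=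
        h.exists_hittingTimes_subset_inter hf hU' hV' (hU i) (hV i) hU'n hV'n (hUn i) (hVn i)
      refine ⟨U'', V'', hU'', hV'', hU''n, hV''n, fun m hm => ?_⟩
      rw [biInter_insert]
      exact ⟨(hsub' hm).2, hsub (hsub' hm).1⟩
  obtain ⟨U', V', hU', hV', hU'n, hV'n, hsub⟩ := key univ finite_univ
  obtain ⟨n, hn⟩ := h.of_prodMap U' V' hU' hV' hU'n hV'n
  exact ⟨n, fun i => mem_iInter₂.1 (hsub hn) i (mem_univ i)⟩

end Transitivity

section Hyperspace

variable {Y : Type*} [TopologicalSpace Y] {f : Y → Y}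
  {F : NonemptyCompacts Y → NonemptyCompacts Y}

theorem coe_iterate_of_coe_eq_image (hF : ∀ K, (F K : Set Y) = f '' K) (n : ℕ)
    (K : NonemptyCompacts Y) : (F^[n] K : Set Y) = f^[n] '' K := by
  induction n generalizing K with
  | zero => simp
  | succ n ih => rw [iterate_succ_apply, ih, hF, ← image_comp, ← iterate_succ]

theorem IsTopologicallyTransitive.nonemptyCompacts_of_prodMap (hf : Continuous f)
    (h : IsTopologicallyTransitive (Prod.map f f)) (hF : ∀ K, (F K : Set Y) = f '' K) :
    IsTopologicallyTransitive F := by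
  rintro 𝒰 𝒱 h𝒰 h𝒱 ⟨A, hA⟩ ⟨B, hB⟩
  obtain ⟨_, ⟨u, ⟨hu, hun, huo⟩, rfl⟩, hAu, hu𝒰⟩ :=
    NonemptyCompacts.isTopologicalBasis.exists_subset_of_mem_open hA h𝒰
  obtain ⟨_, ⟨v, ⟨hv, hvn, hvo⟩, rfl⟩, hBv, hv𝒱⟩ :=
    NonemptyCompacts.isTopologicalBasis.exists_subset_of_mem_open hB h𝒱
  have := hu.to_subtype
  have := hv.to_subtype
  have := hun.to_subtype
  have := hvn.to_subtype
  obtain ⟨n, hn⟩ := h.exists_forall_mem_hittingTimes hf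
    (U := fun p : u × v => p.1) (V := fun p => p.2) (fun p => huo _ p.1.2) (fun p => hvo _ p.2.2)
    (fun p => (hAu.2 _ p.1.2).mono inter_subset_right)
    (fun p => (hBv.2 _ p.2.2).mono inter_subset_right)
  choose z hz using fun p => mem_hittingTimes.1 (hn p)
  let K : NonemptyCompacts Y := ⟨⟨range z, (finite_range z).isCompact⟩, range_nonempty z⟩
  refine ⟨n, F^[n] K, mem_image_of_mem _ (hu𝒰 ?_), hv𝒱 ?_⟩
  · exact range_subset_sUnion_and_forall_inter_nonempty Prod.fst_surjective fun p => (hz p).1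
  · rw [mem_ofPred_eq, coe_iterate_of_coe_eq_image hF, show (K : Set Y) = range z from rfl,
      ← range_comp]
    exact range_subset_sUnion_and_forall_inter_nonempty Prod.snd_surjective fun p => (hz p).2

theorem IsTopologicallyTransitive.exists_mem_hittingTimes_inter_of_nonemptyCompacts
    (hF : ∀ K, (F K : Set Y) = f '' K) (h : IsTopologicallyTransitive F) {B C D : Set Y}
    (hB : IsOpen B) (hC : IsOpen C) (hD : IsOpen D)
    (hBn : B.Nonempty) (hCn : C.Nonempty) (hDn : D.Nonempty) :
    (hittingTimes f C B ∩ hittingTimes f C D).Nonempty := by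
  obtain ⟨b, hb⟩ := hBn
  obtain ⟨c, hc⟩ := hCn
  obtain ⟨d, hd⟩ := hDn
  obtain ⟨s, _, ⟨K, hKC, rfl⟩, hKB, hKD⟩ :=
    h {K | (K : Set Y) ⊆ C} ({K | ((K : Set Y) ∩ B).Nonempty} ∩ {K | ((K : Set Y) ∩ D).Nonempty})
      (NonemptyCompacts.isOpen_subsets_of_isOpen hC)
      ((NonemptyCompacts.isOpen_inter_nonempty_of_isOpen hB).inter
        (NonemptyCompacts.isOpen_inter_nonempty_of_isOpen hD))
      ⟨{c}, by simpa using hc⟩ ⟨{b} ⊔ {d}, ⟨b, by simp, hb⟩, ⟨d, by simp, hd⟩⟩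
  rw [mem_ofPred_eq, coe_iterate_of_coe_eq_image hF] at hKB hKD
  exact ⟨s, hittingTimes_mono hKC subset_rfl hKB, hittingTimes_mono hKC subset_rfl hKD⟩

theorem IsTopologicallyTransitive.prodMap_of_nonemptyCompacts (hf : Continuous f)
    (hF : ∀ K, (F K : Set Y) = f '' K) (h : IsTopologicallyTransitive F) :
    IsTopologicallyTransitive (Prod.map f f) := by
  rw [isTopologicallyTransitive_prodMap_iff]
  rintro A B C D hA hB hC hD ⟨a, ha⟩ hBn hCn hDn
  obtain ⟨s, hsB, hsD⟩ :=
    h.exists_mem_hittingTimes_inter_of_nonemptyCompacts hF hB hC hD hBn hCn hDn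
  obtain ⟨z, -, hzB⟩ := mem_hittingTimes.1 hsB
  obtain ⟨w, hwCD⟩ := mem_hittingTimes.1 hsD
  obtain ⟨n, _, ⟨K, ⟨⟨x, hxK, hxA⟩, ⟨y, hyK, hyB⟩⟩, rfl⟩, hKCD⟩ :=
    h ({K | ((K : Set Y) ∩ A).Nonempty} ∩ {K | ((K : Set Y) ∩ f^[s] ⁻¹' B).Nonempty})
      {K | (K : Set Y) ⊆ C ∩ f^[s] ⁻¹' D}
      ((NonemptyCompacts.isOpen_inter_nonempty_of_isOpen hA).inter
        (NonemptyCompacts.isOpen_inter_nonempty_of_isOpen (hB.preimage (hf.iterate s))))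
      (NonemptyCompacts.isOpen_subsets_of_isOpen (hC.inter (hD.preimage (hf.iterate s))))
      ⟨{a} ⊔ {z}, ⟨a, by simp, ha⟩, ⟨z, by simp, hzB⟩⟩ ⟨{w}, by simpa using hwCD⟩
  rw [mem_ofPred_eq, coe_iterate_of_coe_eq_image hF] at hKCD
  have hxCD := hKCD (mem_image_of_mem _ hxK)
  have hyCD := hKCD (mem_image_of_mem _ hyK)
  exact ⟨n, ⟨_, mem_image_of_mem _ hxA, hxCD.1⟩,
    hittingTimes_preimage_iterate_subset s ⟨_, mem_image_of_mem _ hyB, hyCD.2⟩⟩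

end Hyperspace

theorem weaklyMixing_iff_hyperspace_transitive_general
    {X : Type*} [MetricSpace X]
    (T : X → X) (hT : Continuous T)
    (TK : NonemptyCompacts X → NonemptyCompacts X)
    (hTK : ∀ A : NonemptyCompacts X, (TK A : Set X) = T '' (A : Set X)) :
    (∀ U V : Set (X × X), IsOpen U → IsOpen V → U.Nonempty → V.Nonempty →
      ∃ n : ℕ, ((fun p : X × X => (T p.1, T p.2))^[n] '' U ∩ V).Nonempty) ↔
    (∀ U V : Set (NonemptyCompacts X), IsOpen U → IsOpen V → U.Nonempty → V.Nonempty →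
      ∃ n : ℕ, (TK^[n] '' U ∩ V).Nonempty) :=
  show IsTopologicallyTransitive (Prod.map T T) ↔ IsTopologicallyTransitive TK from
    ⟨fun h => h.nonemptyCompacts_of_prodMap hT hTK, fun h => h.prodMap_of_nonemptyCompacts hT hTK⟩

theorem weaklyMixing_iff_hyperspace_transitive
    {X : Type*} [MetricSpace X] [CompactSpace X]
    (T : X → X) (hT : Continuous T)
    (TK : NonemptyCompacts X → NonemptyCompacts X)
    (hTK : ∀ A : NonemptyCompacts X, (TK A : Set X) = T '' (A : Set X)) :
    (∀ U V : Set (X × X), IsOpen U → IsOpen V → U.Nonempty → V.Nonempty →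
      ∃ n : ℕ, ((fun p : X × X => (T p.1, T p.2))^[n] '' U ∩ V).Nonempty) ↔
    (∀ U V : Set (NonemptyCompacts X), IsOpen U → IsOpen V → U.Nonempty → V.Nonempty →
      ∃ n : ℕ, (TK^[n] '' U ∩ V).Nonempty) :=
  weaklyMixing_iff_hyperspace_transitive_general T hT TK hTK
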